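/- Let H ∈ ℝ^{N×d}, let K = H Hᵀ have eigenvalues λ₁ ≥ … ≥ λ_N, and let P_{r₀} be the orthogonal projection onto the span of the top r₀ eigenvectors of K. Then for every y ∈ ℝ^N in the column space of H, ‖(I − P_{r₀}) y‖₂² ≤ (λ_{r₀+1} / λ_min⁺) ‖y‖₂², where λ_min⁺ is the smallest nonzero eigenvalue of K. In particular, if rank(K) ≤ r₀, every y in the column space of H satisfies P_{r₀} y = y. -/

import Mathlib

/-!
Expand `y` in the orthonormal eigenbasis, `y = ∑ cᵢ uᵢ` with `cᵢ = uᵢ ⬝ y`. The column space of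
`H` is orthogonal to the kernel of `K = H Hᵀ`, so `cᵢ = 0` whenever `λᵢ = 0`. Hence every index
`i > r₀` contributing to `‖(I - P) y‖² = ∑_{i > r₀} cᵢ²` satisfies `λ_min⁺ ≤ λᵢ ≤ λ_{r₀+1}`, and
that tail is at most `(λ_{r₀+1} / λ_min⁺) ∑ cᵢ² = (λ_{r₀+1} / λ_min⁺) ‖y‖²`. If `rank K ≤ r₀`,
the eigenvectors of the nonzero eigenvalues are independent vectors in the range of `K`, so all
`λᵢ` with `i > r₀` vanish and so does the tail.
-/

open Matrix

namespace Matrix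

variable {ι m n R : Type*}

section CommRing

variable [CommRing R] [Fintype n] {u : ι → n → R}

theorem dotProduct_self_sum_smul_of_orthonormal [DecidableEq ι]
    (hu : ∀ i j, u i ⬝ᵥ u j = if i = j then 1 else 0) (s : Finset ι) (c : ι → R) :
    (∑ i ∈ s, c i • u i) ⬝ᵥ (∑ i ∈ s, c i • u i) = ∑ i ∈ s, c i ^ 2 := by
  simp only [sum_dotProduct, dotProduct_sum, smul_dotProduct, dotProduct_smul, hu, smul_eq_mul,
    mul_ite, mul_one, mul_zero, sq]
  exact Finset.sum_congr rfl fun i hi => by simp [hi]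

variable [DecidableEq n] {u : n → n → R}

theorem of_mul_transpose_eq_one_of_orthonormal
    (hu : ∀ i j, u i ⬝ᵥ u j = if i = j then 1 else 0) : of u * (of u)ᵀ = 1 := by
  ext i j
  simpa [mul_apply, one_apply, dotProduct] using hu i j

theorem sum_dotProduct_smul_eq_self_of_orthonormal
    (hu : ∀ i j, u i ⬝ᵥ u j = if i = j then 1 else 0) (v : n → R) :
    ∑ i, (u i ⬝ᵥ v) • u i = v := by
  have hU : (of u)ᵀ * of u = 1 := mul_eq_one_comm.1 (of_mul_transpose_eq_one_of_orthonormal hu)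
  calc ∑ i, (u i ⬝ᵥ v) • u i = (of u *ᵥ v) ᵥ* of u := (vecMul_eq_sum _ _).symm
    _ = v ᵥ* ((of u)ᵀ * of u) := by rw [← vecMul_transpose, vecMul_vecMul]
    _ = v := by rw [hU, vecMul_one]

theorem dotProduct_self_eq_sum_sq_of_orthonormal
    (hu : ∀ i j, u i ⬝ᵥ u j = if i = j then 1 else 0) (v : n → R) :
    v ⬝ᵥ v = ∑ i, (u i ⬝ᵥ v) ^ 2 := by
  conv_lhs => rw [← sum_dotProduct_smul_eq_self_of_orthonormal hu v]
  exact dotProduct_self_sum_smul_of_orthonormal hu _ _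

end CommRing

theorem linearIndependent_of_orthonormal [Field R] [Fintype n] [DecidableEq n] {u : n → n → R}
    (hu : ∀ i j, u i ⬝ᵥ u j = if i = j then 1 else 0) : LinearIndependent R u :=
  linearIndependent_rows_of_isUnit (.of_mul_eq_one _ (of_mul_transpose_eq_one_of_orthonormal hu))

theorem card_le_rank_of_eigenvalue_ne_zero [Field R] [Fintype n] {K : Matrix n n R}
    {u : ι → n → R} (hli : LinearIndependent R u) {ev : ι → R}
    (heig : ∀ i, K *ᵥ u i = ev i • u i) (s : Finset ι) (hs : ∀ i ∈ s, ev i ≠ 0) :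
    s.card ≤ K.rank := by
  let V := Submodule.span R (Set.range (u ∘ ((↑) : s → ι)))
  have hrange : V ≤ LinearMap.range K.mulVecLin := by
    rw [Submodule.span_le]
    rintro _ ⟨i, rfl⟩
    exact ⟨(ev i)⁻¹ • u i, by rw [mulVecLin_apply, mulVec_smul, heig, smul_smul,
      inv_mul_cancel₀ (hs i i.2), one_smul, Function.comp_apply]⟩
  calc s.card = Module.finrank R V := by
        rw [finrank_span_eq_card (hli.comp _ Subtype.val_injective), Fintype.card_coe]
    _ ≤ K.rank := Submodule.finrank_mono hrange

theorem eigenvalue_eq_zero_of_rank_le [Field R] [PartialOrder R] {N : ℕ}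
    {K : Matrix (Fin N) (Fin N) R}
    {u : Fin N → Fin N → R} (hli : LinearIndependent R u) {ev : Fin N → R}
    (heig : ∀ i, K *ᵥ u i = ev i • u i) (hmono : Antitone ev) (hnn : ∀ i, 0 ≤ ev i)
    {r : ℕ} (hr : K.rank ≤ r) {i : Fin N} (hi : r ≤ i) : ev i = 0 := by
  by_contra hne
  have hpos : ∀ j ∈ Finset.Iic i, ev j ≠ 0 := fun j hj =>
    ((lt_of_le_of_ne (hnn i) (Ne.symm hne)).trans_le (hmono (Finset.mem_Iic.1 hj))).ne'
  have := card_le_rank_of_eigenvalue_ne_zero hli heig _ hpos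
  rw [Fin.card_Iic] at this
  omega

section LinearOrderedField

variable [Field R] [LinearOrder R] [IsStrictOrderedRing R]

theorem dotProduct_mulVec_eq_zero_of_mul_transpose_mulVec_eq_zero [Fintype m] [Fintype n]
    {H : Matrix m n R} {w : m → R} (hw : (H * Hᵀ) *ᵥ w = 0) (x : n → R) :
    w ⬝ᵥ H *ᵥ x = 0 := by
  have hker : Hᵀ *ᵥ w = 0 :=
    LinearMap.mem_ker.1 <| (ker_mulVecLin_transpose_mul_self Hᵀ).le <|
      LinearMap.mem_ker.2 (by rwa [transpose_transpose, mulVecLin_apply])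
  rw [dotProduct_mulVec, ← mulVec_transpose, hker, zero_dotProduct]

theorem sum_sq_le_mul_sum_sq_of_one_le [Fintype ι] (t : Finset ι) (c : ι → R) {a : R}
    (ha : 0 ≤ a) (h : ∀ i ∈ t, c i ≠ 0 → 1 ≤ a) :
    ∑ i ∈ t, c i ^ 2 ≤ a * ∑ i, c i ^ 2 := by
  by_cases hc : ∃ i ∈ t, c i ≠ 0
  · obtain ⟨i, hi, hci⟩ := hc
    calc ∑ i ∈ t, c i ^ 2 ≤ ∑ i, c i ^ 2 :=
          Finset.sum_le_sum_of_subset_of_nonneg t.subset_univ fun i _ _ => sq_nonneg _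
      _ ≤ a * ∑ i, c i ^ 2 :=
          le_mul_of_one_le_left (Finset.sum_nonneg fun i _ => sq_nonneg _) (h i hi hci)
  · push Not at hc
    rw [Finset.sum_eq_zero fun i hi => by rw [hc i hi, sq, zero_mul]]
    exact mul_nonneg ha (Finset.sum_nonneg fun i _ => sq_nonneg _)

end LinearOrderedField

end Matrix

theorem top_eigenspace_projection_bound_general {N d : ℕ}
    (H : Matrix (Fin N) (Fin d) ℝ) (K : Matrix (Fin N) (Fin N) ℝ)
    (hK : K = H * Hᵀ)
    (u : Fin N → (Fin N → ℝ))
    (hortho : ∀ i j, u i ⬝ᵥ u j = if i = j then (1 : ℝ) else 0)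
    (ev : Fin N → ℝ) (heig : ∀ i, K.mulVec (u i) = ev i • u i)
    (hmono : Antitone ev) (hnn : ∀ i, 0 ≤ ev i)
    (lamMinPos : ℝ) (hlp : 0 < lamMinPos)
    (hlmin : ∀ i, ev i ≠ 0 → lamMinPos ≤ ev i)
    (r₀ : ℕ) (hr₀ : r₀ < N)
    (P : (Fin N → ℝ) → (Fin N → ℝ))
    (hP : ∀ y, P y = ∑ i ∈ Finset.univ.filter (fun i : Fin N => (i : ℕ) < r₀),
        (u i ⬝ᵥ y) • u i)
    (y : Fin N → ℝ) (hy : ∃ x : Fin d → ℝ, y = H.mulVec x) :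
    (y - P y) ⬝ᵥ (y - P y) ≤ (ev ⟨r₀, hr₀⟩ / lamMinPos) * (y ⬝ᵥ y) ∧
    (K.rank ≤ r₀ → P y = y) := by
  set s := Finset.univ.filter fun i : Fin N => (i : ℕ) < r₀
  have htail : y - P y = ∑ i ∈ sᶜ, (u i ⬝ᵥ y) • u i := by
    rw [hP, sub_eq_iff_eq_add, Finset.sum_compl_add_sum,
      sum_dotProduct_smul_eq_self_of_orthonormal hortho]
  have hzero : ∀ i, ev i = 0 → u i ⬝ᵥ y = 0 := fun i hi => by
    obtain ⟨x, rfl⟩ := hy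
    exact dotProduct_mulVec_eq_zero_of_mul_transpose_mulVec_eq_zero
      (by rw [← hK, heig, hi, zero_smul]) x
  refine ⟨?_, fun hrank => ?_⟩
  · rw [htail, dotProduct_self_sum_smul_of_orthonormal hortho,
      dotProduct_self_eq_sum_sq_of_orthonormal hortho y]
    refine sum_sq_le_mul_sum_sq_of_one_le _ _ (div_nonneg (hnn _) hlp.le) fun i hi hci => ?_
    have hri : (⟨r₀, hr₀⟩ : Fin N) ≤ i := by simpa [s, Fin.le_def] using hi
    exact (one_le_div hlp).2 ((hlmin i (mt (hzero i) hci)).trans (hmono hri))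
  · rw [eq_comm, ← sub_eq_zero, htail]
    refine Finset.sum_eq_zero fun i hi => ?_
    have hri : r₀ ≤ (i : ℕ) := by simpa [s] using hi
    rw [hzero i (eigenvalue_eq_zero_of_rank_le (linearIndependent_of_orthonormal hortho) heig
      hmono hnn hrank hri), zero_smul]

theorem top_eigenspace_projection_bound {N d : ℕ}
    (H : Matrix (Fin N) (Fin d) ℝ) (K : Matrix (Fin N) (Fin N) ℝ)
    (hK : K = H * Hᵀ) (hKne : K ≠ 0)
    (u : Fin N → (Fin N → ℝ))
    (hortho : ∀ i j, u i ⬝ᵥ u j = if i = j then (1 : ℝ) else 0)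
    (ev : Fin N → ℝ) (heig : ∀ i, K.mulVec (u i) = ev i • u i)
    (hmono : Antitone ev) (hnn : ∀ i, 0 ≤ ev i)
    (lamMinPos : ℝ) (hlp : 0 < lamMinPos) (hlmem : ∃ i, ev i = lamMinPos)
    (hlmin : ∀ i, ev i ≠ 0 → lamMinPos ≤ ev i)
    (r₀ : ℕ) (hr₀ : r₀ < N)
    (P : (Fin N → ℝ) → (Fin N → ℝ))
    (hP : ∀ y, P y = ∑ i ∈ Finset.univ.filter (fun i : Fin N => (i : ℕ) < r₀),
        (u i ⬝ᵥ y) • u i)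
    (y : Fin N → ℝ) (hy : ∃ x : Fin d → ℝ, y = H.mulVec x) :
    (y - P y) ⬝ᵥ (y - P y) ≤ (ev ⟨r₀, hr₀⟩ / lamMinPos) * (y ⬝ᵥ y) ∧
    (K.rank ≤ r₀ → P y = y) :=
  top_eigenspace_projection_bound_general H K hK u hortho ev heig hmono hnn lamMinPos hlp hlmin r₀
    hr₀ P hP y hy
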